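/- (Filters lie in the RKHS of the Gaussian kernel.) Let γ > 0, let σ: ℝ → ℝ be given by a power series σ(t) = ∑_{j=0}^∞ a_j t^j, and define C^γ_σ(λ) = √(∑_{j=0}^∞ (j! e^{2γ} / (2γ)^j) a_j² λ^{2j}). Let w ∈ ℝ^d satisfy C^γ_σ(‖w‖₂) < ∞. Then there exists a square-summable family w◇ ∈ ℓ²(T), indexed by the set T of finite tuples from {1,…,d}, such that ‖w◇‖_{ℓ²} = C^γ_σ(‖w‖₂) and, for every unit vector z ∈ ℝ^d, the family (w◇_τ φ_γ(z)_τ)_{τ∈T} is absolutely summable with ∑_{τ∈T} w◇_τ φ_γ(z)_τ = σ(⟨w, z⟩). -/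

import Mathlib

open scoped RealInnerProductSpace

/-- The index set `T = ⋃_{j ≥ 0} [d]^j` of all finite tuples of indices from `{1,…,d}`. -/
abbrev Tup (d : ℕ) : Type := Σ j : ℕ, Fin j → Fin d

/-- The feature map of the Gaussian RBF kernel with parameter `γ` on the unit sphere:
`φ_γ(z)_{(k₁,…,k_j)} = e^{-γ} ((2γ)^j / j!)^{1/2} z_{k₁} ⋯ z_{k_j}`. -/
noncomputable def phiGauss (d : ℕ) (γ : ℝ) (z : EuclideanSpace ℝ (Fin d)) (τ : Tup d) : ℝ :=
  Real.exp (-γ) * Real.sqrt ((2 * γ) ^ τ.1 / (Nat.factorial τ.1 : ℝ)) *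
    ∏ i : Fin τ.1, z (τ.2 i)

/-- `C^γ_σ(λ) = √(∑_{j=0}^∞ (j! e^{2γ}/(2γ)^j) a_j² λ^{2j})`, the quantity associated
to the Gaussian RBF kernel for an activation with power-series coefficients `a`. -/
noncomputable def CsigmaGauss (γ : ℝ) (a : ℕ → ℝ) (lam : ℝ) : ℝ :=
  Real.sqrt (∑' j : ℕ,
    ((Nat.factorial j : ℝ) * Real.exp (2 * γ) / (2 * γ) ^ j) * (a j) ^ 2 * lam ^ (2 * j))

/-!
Both `w◇` and `φ_γ(z)` are monomial families on `T`: on tuples of length `j` they are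
`c_j · x_{k₁} ⋯ x_{k_j}`, and the sum of such a family over the tuples of length `j` is
`c_j (∑ᵢ xᵢ)^j`. Taking `w◇_τ = e^γ √(j!/(2γ)^j) a_j w_{k₁} ⋯ w_{k_j}`, the products
`w◇_τ φ_γ(z)_τ` therefore sum over length `j` to `a_j ⟪w, z⟫^j`, and the squares `(w◇_τ)²` to the
`j`-th term of `C^γ_σ(‖w‖)²`. Absolute summability of `w◇ φ_γ(z)` is Cauchy–Schwarz, since
`‖φ_γ(z)‖² = e^{-2γ} ∑_j (2γ)^j / j! = 1`.
-/

open scoped Nat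
open Finset

namespace Tup

variable {d : ℕ}

def monomial (c : ℕ → ℝ) (x : Fin d → ℝ) (τ : Tup d) : ℝ :=
  c τ.1 * ∏ i, x (τ.2 i)

theorem monomial_mul (c c' : ℕ → ℝ) (x x' : Fin d → ℝ) (τ : Tup d) :
    monomial c x τ * monomial c' x' τ = monomial (c * c') (x * x') τ := by
  simp only [monomial, Pi.mul_apply, prod_mul_distrib]
  ring

theorem sum_monomial_fiber (c : ℕ → ℝ) (x : Fin d → ℝ) (j : ℕ) :
    ∑ k : Fin j → Fin d, monomial c x ⟨j, k⟩ = c j * (∑ i, x i) ^ j := by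
  rw [Fintype.sum_pow, mul_sum]
  rfl

theorem hasSum_monomial {c : ℕ → ℝ} {x : Fin d → ℝ} {s : ℝ}
    (h : HasSum (fun j => c j * (∑ i, x i) ^ j) s)
    (habs : Summable fun τ => |monomial c x τ|) : HasSum (monomial c x) s :=
  h.sigma_of_hasSum (fun j => sum_monomial_fiber c x j ▸ hasSum_fintype _) habs.of_abs

theorem hasSum_monomial_of_nonneg {c : ℕ → ℝ} {x : Fin d → ℝ} {s : ℝ} (hc : 0 ≤ c)
    (hx : 0 ≤ x) (h : HasSum (fun j => c j * (∑ i, x i) ^ j) s) :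
    HasSum (monomial c x) s := by
  have hnonneg (τ : Tup d) : 0 ≤ monomial c x τ :=
    mul_nonneg (hc _) (prod_nonneg fun i _ => hx _)
  refine hasSum_monomial h ?_
  simp_rw [abs_of_nonneg (hnonneg _)]
  refine (summable_sigma_of_nonneg hnonneg).2 ⟨fun j => (hasSum_fintype _).summable, ?_⟩
  simpa only [tsum_fintype, sum_monomial_fiber] using h.summable

end Tup

theorem summable_abs_mul_of_summable_sq {ι : Type*} {f g : ι → ℝ}
    (hf : Summable fun i => f i ^ 2) (hg : Summable fun i => g i ^ 2) :
    Summable fun i => |f i * g i| := by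
  refine ((hf.add hg).div_const 2).of_nonneg_of_le (fun i => abs_nonneg _) fun i => ?_
  rw [abs_mul, le_div_iff₀ two_pos]
  nlinarith [sq_nonneg (|f i| - |g i|), sq_abs (f i), sq_abs (g i)]

section Gaussian

variable {d : ℕ} {γ : ℝ}

theorem phiGauss_eq_monomial (z : EuclideanSpace ℝ (Fin d)) :
    phiGauss d γ z = Tup.monomial (fun j => Real.exp (-γ) * √((2 * γ) ^ j / j !)) z :=
  rfl

/-- The representer `w◇` of the filter `z ↦ σ(⟪w, z⟫)`. -/
noncomputable def gaussFilter (γ : ℝ) (a : ℕ → ℝ) (w : EuclideanSpace ℝ (Fin d)) : Tup d → ℝ :=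
  Tup.monomial (fun j => Real.exp γ * √(j ! / (2 * γ) ^ j) * a j) w

theorem hasSum_phiGauss_sq (hγ : 0 ≤ γ) {z : EuclideanSpace ℝ (Fin d)} (hz : ‖z‖ = 1) :
    HasSum (fun τ => phiGauss d γ z τ ^ 2) 1 := by
  have hcoeff (j : ℕ) : (Real.exp (-γ) * √((2 * γ) ^ j / j !)) ^ 2 =
      Real.exp (-(2 * γ)) * ((2 * γ) ^ j / j !) := by
    rw [mul_pow, Real.sq_sqrt (by positivity), ← Real.exp_nat_mul]
    push_cast
    ring_nf
  have hnorm : ∑ i, z i ^ 2 = 1 := by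
    rw [← EuclideanSpace.real_norm_sq_eq, hz, one_pow]
  have hexp := (NormedSpace.expSeries_div_hasSum_exp (2 * γ)).mul_left (Real.exp (-(2 * γ)))
  rw [← Real.exp_eq_exp_ℝ, ← Real.exp_add, neg_add_cancel, Real.exp_zero] at hexp
  simp_rw [sq, phiGauss_eq_monomial, Tup.monomial_mul]
  refine Tup.hasSum_monomial_of_nonneg (fun j => mul_self_nonneg _) (fun i => mul_self_nonneg _) ?_
  simpa only [Pi.mul_apply, ← sq, hnorm, one_pow, mul_one, hcoeff] using hexp

theorem hasSum_gaussFilter_sq (hγ : 0 ≤ γ) (a : ℕ → ℝ) (w : EuclideanSpace ℝ (Fin d)) {s : ℝ}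
    (hs : HasSum (fun j : ℕ =>
      ((j ! : ℝ) * Real.exp (2 * γ) / (2 * γ) ^ j) * (a j) ^ 2 * ‖w‖ ^ (2 * j)) s) :
    HasSum (fun τ => gaussFilter γ a w τ ^ 2) s := by
  have hcoeff (j : ℕ) : (Real.exp γ * √(j ! / (2 * γ) ^ j) * a j) ^ 2 =
      (j ! * Real.exp (2 * γ) / (2 * γ) ^ j) * a j ^ 2 := by
    rw [mul_pow, mul_pow, Real.sq_sqrt (by positivity), ← Real.exp_nat_mul]
    push_cast
    ring
  have hnorm (j : ℕ) : (∑ i, w i ^ 2) ^ j = ‖w‖ ^ (2 * j) := by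
    rw [← EuclideanSpace.real_norm_sq_eq, ← pow_mul]
  simp_rw [sq (gaussFilter γ a w _), gaussFilter, Tup.monomial_mul]
  refine Tup.hasSum_monomial_of_nonneg (fun j => mul_self_nonneg _) (fun i => mul_self_nonneg _) ?_
  simpa only [Pi.mul_apply, ← sq, hnorm, hcoeff] using hs

theorem gaussFilter_mul_phiGauss (hγ : 0 < γ) (a : ℕ → ℝ) (w z : EuclideanSpace ℝ (Fin d))
    (τ : Tup d) :
    gaussFilter γ a w τ * phiGauss d γ z τ = Tup.monomial a (fun i => w i * z i) τ := by
  rw [gaussFilter, phiGauss_eq_monomial, Tup.monomial_mul]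
  congr 1
  funext j
  have hexp : Real.exp γ * Real.exp (-γ) = 1 := by
    rw [← Real.exp_add, add_neg_cancel, Real.exp_zero]
  have hsqrt : √(j ! / (2 * γ) ^ j) * √((2 * γ) ^ j / j !) = 1 := by
    rw [← inv_div, Real.sqrt_inv, inv_mul_cancel₀ (by positivity)]
  calc Real.exp γ * √(j ! / (2 * γ) ^ j) * a j * (Real.exp (-γ) * √((2 * γ) ^ j / j !))
      = (Real.exp γ * Real.exp (-γ)) * (√(j ! / (2 * γ) ^ j) * √((2 * γ) ^ j / j !)) * a j := by
        ring
    _ = a j := by rw [hexp, hsqrt, one_mul, one_mul]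

end Gaussian

theorem filter_in_RKHS_gaussian_kernel_general
    (d : ℕ) (γ : ℝ) (hγ : 0 < γ)
    (a : ℕ → ℝ) (σ : ℝ → ℝ)
    (w : EuclideanSpace ℝ (Fin d))
    (hσ : ∀ t : ℝ, |t| ≤ ‖w‖ → HasSum (fun j : ℕ => a j * t ^ j) (σ t))
    (hC : Summable fun j : ℕ =>
      ((Nat.factorial j : ℝ) * Real.exp (2 * γ) / (2 * γ) ^ j) * (a j) ^ 2 * ‖w‖ ^ (2 * j)) :
    ∃ wd : Tup d → ℝ,
      (Summable fun τ : Tup d => (wd τ) ^ 2) ∧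
      Real.sqrt (∑' τ : Tup d, (wd τ) ^ 2) = CsigmaGauss γ a ‖w‖ ∧
      ∀ z : EuclideanSpace ℝ (Fin d), ‖z‖ = 1 →
        (Summable fun τ : Tup d => |wd τ * phiGauss d γ z τ|) ∧
        HasSum (fun τ : Tup d => wd τ * phiGauss d γ z τ) (σ ⟪w, z⟫) := by
  have hsq := hasSum_gaussFilter_sq hγ.le a w hC.hasSum
  refine ⟨gaussFilter γ a w, hsq.summable, by rw [hsq.tsum_eq, CsigmaGauss], fun z hz => ?_⟩
  have habs := summable_abs_mul_of_summable_sq hsq.summable (hasSum_phiGauss_sq hγ.le hz).summable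
  refine ⟨habs, ?_⟩
  have hinner : ∑ i, w i * z i = ⟪w, z⟫ := by simp [PiLp.inner_apply, mul_comm]
  have hle : |⟪w, z⟫| ≤ ‖w‖ := by simpa [hz] using abs_real_inner_le_norm w z
  simp_rw [gaussFilter_mul_phiGauss hγ] at habs ⊢
  exact Tup.hasSum_monomial (by rw [hinner]; exact hσ _ hle) habs

/-- filters lie in the RKHS of the Gaussian kernel.
If `σ(t) = ∑_j a_j t^j` (convergent on `[-‖w‖, ‖w‖]`) and `C^γ_σ(‖w‖₂) < ∞`
(i.e. the defining series is summable), then there is `w◇ ∈ ℓ²(T)` with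
`‖w◇‖_{ℓ²} = C^γ_σ(‖w‖₂)` such that for every unit vector `z`,
`(w◇_τ φ_γ(z)_τ)_τ` is absolutely summable with sum `σ(⟪w, z⟫)`. -/
theorem filter_in_RKHS_gaussian_kernel
    (d : ℕ) (hd : 1 ≤ d) (γ : ℝ) (hγ : 0 < γ)
    (a : ℕ → ℝ) (σ : ℝ → ℝ)
    (w : EuclideanSpace ℝ (Fin d))
    (hσ : ∀ t : ℝ, |t| ≤ ‖w‖ → HasSum (fun j : ℕ => a j * t ^ j) (σ t))
    (hC : Summable fun j : ℕ =>
      ((Nat.factorial j : ℝ) * Real.exp (2 * γ) / (2 * γ) ^ j) * (a j) ^ 2 * ‖w‖ ^ (2 * j)) :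
    ∃ wd : Tup d → ℝ,
      (Summable fun τ : Tup d => (wd τ) ^ 2) ∧
      Real.sqrt (∑' τ : Tup d, (wd τ) ^ 2) = CsigmaGauss γ a ‖w‖ ∧
      ∀ z : EuclideanSpace ℝ (Fin d), ‖z‖ = 1 →
        (Summable fun τ : Tup d => |wd τ * phiGauss d γ z τ|) ∧
        HasSum (fun τ : Tup d => wd τ * phiGauss d γ z τ) (σ ⟪w, z⟫) :=
  filter_in_RKHS_gaussian_kernel_general d γ hγ a σ w hσ hC
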